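/- arXiv:1003.5070 — 6 statements merged into one kernel-verified Lean document; each statement's English description precedes it below -/
import Mathlib

section
/- Let θ be a formal power series in ℂ[[a]] with θ(0) = 0 and θ'(0) ≠ 0, in an algebra where a*b = b*a + b^2 holds and b-adic/a-adic completeness is available. Then setting α := θ(a) and β := b·θ'(a), one has α*β - β*α = β^2. -/
theorem commutator_mul_eq_sq_of_mul_eq_add {R : Type*} [Ring R] {x y b : R}
    (hxy : Commute x y) (h : x * b = b * x + b * y * b) :
    x * (b * y) - b * y * x = b * y * (b * y) :=
  calc x * (b * y) - b * y * x
      = (x * b) * y - b * (x * y) := by rw [hxy.eq]; noncomm_ring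
    _ = (b * x + b * y * b) * y - b * (x * y) := by rw [h]
    _ = b * y * (b * y) := by noncomm_ring

open PowerSeries in
theorem stmt2_general {A : Type*} [Ring A] [Algebra ℂ A]
    (Φ : PowerSeries ℂ →ₐ[ℂ] A) (b : A) (θ : PowerSeries ℂ)
    (hrel : ∀ T : PowerSeries ℂ, Φ T * b = b * Φ T + b * Φ (d⁄dX ℂ T) * b) :
    Φ θ * (b * Φ (d⁄dX ℂ θ)) - (b * Φ (d⁄dX ℂ θ)) * Φ θ
      = (b * Φ (d⁄dX ℂ θ)) * (b * Φ (d⁄dX ℂ θ)) :=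
  commutator_mul_eq_sq_of_mul_eq_add ((Commute.all θ (d⁄dX ℂ θ)).map Φ) (hrel θ)

open PowerSeries in
/-- Let `θ ∈ ℂ[[a]]` with `θ(0) = 0`, `θ'(0) ≠ 0`, acting in an algebra `Â` (here
axiomatized: `Φ T` is the element `T(a)`, and the commutation rule
`T(a)*b = b*T(a) + b*T'(a)*b` holds for every formal power series `T`).
Then `α := θ(a)` and `β := b·θ'(a)` satisfy `α*β - β*α = β^2`. -/
theorem stmt2 {A : Type*} [Ring A] [Algebra ℂ A]
    (Φ : PowerSeries ℂ →ₐ[ℂ] A) (b : A) (θ : PowerSeries ℂ)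
    (hθ0 : constantCoeff θ = 0) (hθ1 : coeff 1 θ ≠ 0)
    (hrel : ∀ T : PowerSeries ℂ, Φ T * b = b * Φ T + b * Φ (d⁄dX ℂ T) * b) :
    Φ θ * (b * Φ (d⁄dX ℂ θ)) - (b * Φ (d⁄dX ℂ θ)) * Φ θ
      = (b * Φ (d⁄dX ℂ θ)) * (b * Φ (d⁄dX ℂ θ)) :=
  stmt2_general Φ b θ hrel
end

section
/- In the completed algebra Â, for any formal power series T ∈ ℂ[[x]], one has T(a)·b = b·T(a) + b·T'(a)·b, where T' is the formal derivative of T. -/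
/-!
The pairs `(t, t')` with `t b = b t + b t' b` obey the Leibniz rule: formally `t' = [b⁻¹, t]`,
an inner derivation. Hence the power series `T` with `T(a) b = b T(a) + b T'(a) b` form a
subalgebra; it contains `X` by the defining relation of `a`, so it contains every polynomial.
A general `T` is the limit of its truncations, whose derivatives are the truncations of `T'`,
and the identity passes to the limit.
-/

open PowerSeries Filter Topology

theorem mul_mul_eq_of_mul_eq_add {A : Type*} [Ring A] {b s s' t t' : A}
    (hs : s * b = b * s + b * s' * b) (ht : t * b = b * t + b * t' * b) :
    s * t * b = b * (s * t) + b * (s' * t + s * t') * b :=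
  calc s * t * b = s * b * t + s * b * t' * b := by rw [mul_assoc, ht]; noncomm_ring
    _ = b * (s * t) + b * s' * (b * t + b * t' * b) + b * (s * t') * b := by
        rw [hs]; noncomm_ring
    _ = b * (s * t) + b * (s' * t + s * t') * b := by rw [← ht]; noncomm_ring

section TwistedCommutation

variable {R A : Type*} [CommRing R] [Ring A] [Algebra R A]

def twistedCommSubalgebra (Φ : R⟦X⟧ →ₐ[R] A) (b : A) : Subalgebra R R⟦X⟧ where
  carrier := {T | Φ T * b = b * Φ T + b * Φ (d⁄dX R T) * b}
  mul_mem' {s t} hs ht := by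
    simp only [Set.mem_ofPred_eq, Derivation.leibniz, smul_eq_mul] at hs ht ⊢
    rw [mul_comm t, add_comm (s * _), map_mul, map_add, map_mul, map_mul,
      mul_mul_eq_of_mul_eq_add hs ht]
  add_mem' {s t} hs ht := by
    simp only [Set.mem_ofPred_eq, map_add] at hs ht ⊢
    rw [add_mul, hs, ht]
    noncomm_ring
  algebraMap_mem' r := by
    simp only [Set.mem_ofPred_eq, AlgHom.commutes, Derivation.map_algebraMap, map_zero,
      mul_zero, zero_mul, add_zero, Algebra.commutes]

theorem coe_mem_twistedCommSubalgebra {Φ : R⟦X⟧ →ₐ[R] A} {b : A}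
    (hrel : Φ X * b = b * Φ X + b * b) (P : Polynomial R) :
    (P : R⟦X⟧) ∈ twistedCommSubalgebra Φ b := by
  have hX : X ∈ twistedCommSubalgebra Φ b := by
    simpa [twistedCommSubalgebra] using hrel
  have htop : (twistedCommSubalgebra Φ b).comap (Polynomial.coeToPowerSeries.algHom R) = ⊤ := by
    rw [eq_top_iff, ← Polynomial.adjoin_X, Algebra.adjoin_le_iff, Set.singleton_subset_iff]
    simpa [Polynomial.coeToPowerSeries.algHom_apply] using hX
  have hP : P ∈ (twistedCommSubalgebra Φ b).comap (Polynomial.coeToPowerSeries.algHom R) :=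
    htop ▸ Algebra.mem_top
  simpa [Polynomial.coeToPowerSeries.algHom_apply] using hP

end TwistedCommutation

open PowerSeries in
/-- In the completed algebra `Â` (axiomatized: a topological `ℂ`-algebra `A` together
with a `ℂ`-algebra morphism `Φ : ℂ[[X]] → A`, `T ↦ T(a)`, which is continuous in the
sense that the truncations of `T` evaluated at `a` converge to `T(a)`), if the element
`a := Φ X` satisfies `a*b = b*a + b^2`, then for every formal power series `T` one has
`T(a)·b = b·T(a) + b·T'(a)·b`. -/
theorem stmt3 {A : Type*} [Ring A] [Algebra ℂ A] [TopologicalSpace A]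
    [IsTopologicalRing A] [T2Space A]
    (Φ : PowerSeries ℂ →ₐ[ℂ] A) (b : A)
    (hcont : ∀ T : PowerSeries ℂ,
      Filter.Tendsto (fun n : ℕ => Φ ((T.trunc n : Polynomial ℂ) : PowerSeries ℂ))
        Filter.atTop (nhds (Φ T)))
    (hrel : Φ X * b = b * Φ X + b * b) :
    ∀ T : PowerSeries ℂ, Φ T * b = b * Φ T + b * Φ (d⁄dX ℂ T) * b := by
  intro T
  have hT := (hcont T).comp (tendsto_add_atTop_nat 1)
  have hT' : Tendsto (fun n : ℕ => Φ (d⁄dX ℂ (T.trunc (n + 1) : PowerSeries ℂ))) atTop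
      (𝓝 (Φ (d⁄dX ℂ T))) := by
    simpa only [derivative_coe, ← trunc_derivative] using hcont (d⁄dX ℂ T)
  have hpoly (n : ℕ) : Φ (T.trunc (n + 1)) * b =
      b * Φ (T.trunc (n + 1)) + b * Φ (d⁄dX ℂ (T.trunc (n + 1) : PowerSeries ℂ)) * b :=
    coe_mem_twistedCommSubalgebra hrel _
  refine tendsto_nhds_unique (hT.mul_const b) ?_
  exact ((hT.const_mul b).add ((hT'.const_mul b).mul_const b)).congr fun n => (hpoly n).symm
end

section
/- The element 1 + a is not invertible in the algebra Ã of formal series Σ_ν P_ν(a)·b^ν with P_ν polynomials in ℂ[x] and relation a·b - b·a = b^2. -/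
/- We realize the algebra `Ã` faithfully as an algebra of operators on `ℂ[[s]]`:
`a` acts as multiplication by `s` and `b` as integration from `0`
(so that `a∘b - b∘a = b∘b`, i.e. `a·b - b·a = b²`).
An element `Σ_ν P_ν(a)·b^ν` of `Ã` (with `P_ν ∈ ℂ[x]`) is the operator `tildeA P`
defined coefficientwise below (the sum converges `b`-adically since `b^ν f` has
order `≥ ν`).  Invertibility of `1 + a` in `Ã` means existence of a two-sided
inverse that is again an operator of this form. -/

/-- The operator `b` : integration from `0` on `ℂ[[s]]`. -/
noncomputable def bOp : PowerSeries ℂ →ₗ[ℂ] PowerSeries ℂ where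
  toFun f := PowerSeries.mk fun n =>
    if n = 0 then 0 else (n : ℂ)⁻¹ * PowerSeries.coeff (R := ℂ) (n - 1) f
  map_add' f g := by
    ext n
    simp only [PowerSeries.coeff_mk, map_add]
    split <;> ring
  map_smul' c f := by
    ext n
    simp only [PowerSeries.coeff_mk, map_smul, RingHom.id_apply, smul_eq_mul]
    split <;> ring

/-- The operator `Σ_ν P_ν(a)·b^ν` on `ℂ[[s]]`, where `a` is multiplication by `s`. -/
noncomputable def tildeA (P : ℕ → Polynomial ℂ) : PowerSeries ℂ → PowerSeries ℂ :=
  fun f => PowerSeries.mk fun n => ∑ ν ∈ Finset.range (n + 1),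
    PowerSeries.coeff (R := ℂ) n ((P ν : PowerSeries ℂ) * (bOp ^ ν) f)

/-! A right inverse `T = tildeA Q` of `1 + a` must act as `f ↦ f · (1 + s)⁻¹`. On the monomial
`s ^ k`, the term `Q_ν(a)·b^ν` scales coefficients by `1 / ((k + 1) ⋯ (k + ν))`, so as `k → ∞` only
`Q₀` survives, and comparing coefficients forces `Q₀ = (1 + s)⁻¹`, which is not a polynomial. -/

open PowerSeries Filter Topology Finset

lemma tildeA_one_add_X (f : PowerSeries ℂ) :
    tildeA (fun ν => if ν = 0 then 1 + Polynomial.X else 0) f = (1 + X) * f := by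
  ext n
  rw [tildeA, coeff_mk, sum_eq_single 0 (fun ν _ hν => by simp [hν]) (by simp)]
  simp

lemma bOp_X_pow (m : ℕ) : bOp (X ^ m : PowerSeries ℂ) = ((m : ℂ) + 1)⁻¹ • X ^ (m + 1) := by
  ext n
  simp only [bOp, LinearMap.coe_mk, AddHom.coe_mk, coeff_mk, map_smul, coeff_X_pow, smul_eq_mul]
  rcases n with _ | n
  · simp
  · by_cases hn : n = m <;> simp [hn]

lemma bOp_pow_X_pow (ν k : ℕ) :
    (bOp ^ ν) (X ^ k : PowerSeries ℂ) = (((k + 1).ascFactorial ν : ℕ) : ℂ)⁻¹ • X ^ (k + ν) := by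
  induction ν with
  | zero => simp
  | succ ν ih =>
    rw [pow_succ', Module.End.mul_apply, ih, map_smul, bOp_X_pow, smul_smul, Nat.ascFactorial_succ,
      ← add_assoc, ← mul_inv]
    push_cast
    ring_nf

lemma coeff_tildeA_X_pow (P : ℕ → Polynomial ℂ) (k m : ℕ) :
    coeff (k + m) (tildeA P (X ^ k)) =
      ∑ ν ∈ range (m + 1), (P ν).coeff (m - ν) * (((k + 1).ascFactorial ν : ℕ) : ℂ)⁻¹ := by
  have hterm : ∀ ν, coeff (k + m) ((P ν : PowerSeries ℂ) * (bOp ^ ν) (X ^ k)) =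
      if ν ≤ m then (P ν).coeff (m - ν) * (((k + 1).ascFactorial ν : ℕ) : ℂ)⁻¹ else 0 := by
    intro ν
    rw [bOp_pow_X_pow, mul_smul_comm, map_smul, coeff_mul_X_pow', smul_eq_mul]
    by_cases hν : ν ≤ m
    · rw [if_pos (by omega), if_pos hν, show k + m - (k + ν) = m - ν by omega,
        Polynomial.coeff_coe, mul_comm]
    · rw [if_neg (by omega), if_neg hν, mul_zero]
  have hrange : (range (k + m + 1)).filter (· ≤ m) = range (m + 1) := by
    ext ν
    simp only [mem_filter, mem_range]
    omega
  rw [tildeA, coeff_mk, sum_congr rfl fun ν _ => hterm ν, ← sum_filter, hrange]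

lemma tendsto_inv_ascFactorial {ν : ℕ} (hν : ν ≠ 0) :
    Tendsto (fun k : ℕ => (((k + 1).ascFactorial ν : ℕ) : ℂ)⁻¹) atTop (𝓝 0) := by
  have hle : ∀ k, k + 1 ≤ (k + 1).ascFactorial ν := fun k =>
    (Nat.le_self_pow hν _).trans (Nat.pow_succ_le_ascFactorial _ _)
  exact tendsto_inv_atTop_nhds_zero_nat.comp
    (tendsto_atTop_mono hle (tendsto_add_atTop_nat 1))

lemma tendsto_coeff_tildeA_X_pow (P : ℕ → Polynomial ℂ) (m : ℕ) :
    Tendsto (fun k => coeff (k + m) (tildeA P (X ^ k))) atTop (𝓝 ((P 0).coeff m)) := by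
  have h := (tendsto_finsetSum (range m) fun ν _ =>
    (tendsto_inv_ascFactorial ν.succ_ne_zero).const_mul ((P (ν + 1)).coeff (m - (ν + 1)))).add_const
      ((P 0).coeff m)
  simpa [coeff_tildeA_X_pow, sum_range_succ'] using h

/-- The element `1 + a` is not invertible in the algebra `Ã` of formal series
`Σ_ν P_ν(a)·b^ν` with polynomial coefficients `P_ν ∈ ℂ[x]` and relation
`a·b - b·a = b²`. -/
theorem stmt4 :
    ¬ ∃ Q : ℕ → Polynomial ℂ,
      (tildeA (fun ν => if ν = 0 then 1 + Polynomial.X else 0)) ∘ (tildeA Q) = id ∧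
      (tildeA Q) ∘ (tildeA (fun ν => if ν = 0 then 1 + Polynomial.X else 0)) = id := by
  rintro ⟨Q, hQ, -⟩
  have hunit : constantCoeff (1 + X : PowerSeries ℂ) ≠ 0 := by simp
  have hright (f : PowerSeries ℂ) : tildeA Q f = f * (1 + X)⁻¹ := by
    rw [eq_mul_inv_iff_mul_eq hunit, mul_comm, ← tildeA_one_add_X]
    exact congrFun hQ f
  have hQ0 : ((Q 0 : Polynomial ℂ) : PowerSeries ℂ) = (1 + X)⁻¹ := by
    ext m
    rw [Polynomial.coeff_coe]
    refine tendsto_nhds_unique (tendsto_coeff_tildeA_X_pow Q m) ?_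
    simp only [hright, mul_comm _ (1 + X : PowerSeries ℂ)⁻¹, coeff_mul_X_pow, add_comm _ m]
    exact tendsto_const_nhds
  have hmul : (Polynomial.X + Polynomial.C 1 : Polynomial ℂ) * Q 0 = 1 := by
    rw [← Polynomial.coe_inj, Polynomial.coe_mul, hQ0, Polynomial.coe_one, Polynomial.coe_add,
      Polynomial.coe_X, Polynomial.coe_C, map_one, add_comm, PowerSeries.mul_inv_cancel _ hunit]
  exact Polynomial.not_isUnit_X_add_C 1 (.of_mul_eq_one _ hmul)
end

section
/- Any ℂ-linear bijection f : ℂ[[b]] → ℂ[[b]] satisfying f(b^n·ℂ[[b]]) ⊆ b^n·ℂ[[b]] for all n automatically satisfies f(b^n·ℂ[[b]]) = b^n·ℂ[[b]] for all n. -/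
open PowerSeries in
/-- Every bijective `ℂ`-linear `b`-compatible map `f : ℂ[[b]] → ℂ[[b]]`
(i.e. `f(b^n·ℂ[[b]]) ⊆ b^n·ℂ[[b]]` for all `n`) is strictly `b`-compatible
(i.e. `f(b^n·ℂ[[b]]) = b^n·ℂ[[b]]` for all `n`). -/
theorem stmt8 (f : PowerSeries ℂ →ₗ[ℂ] PowerSeries ℂ)
    (hbij : Function.Bijective f)
    (hcompat : ∀ (n : ℕ) (g : PowerSeries ℂ),
      (X : PowerSeries ℂ) ^ n ∣ g → (X : PowerSeries ℂ) ^ n ∣ f g) :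
    ∀ n : ℕ, f '' {g | (X : PowerSeries ℂ) ^ n ∣ g} = {g | (X : PowerSeries ℂ) ^ n ∣ g} := by
  intro n
  -- the coefficient map recording the first `n` coefficients
  set φ : PowerSeries ℂ →ₗ[ℂ] (Fin n → ℂ) :=
    LinearMap.pi (fun i : Fin n => PowerSeries.coeff (R := ℂ) i) with hφ
  have hker : ∀ g : PowerSeries ℂ, g ∈ LinearMap.ker φ ↔ (X : PowerSeries ℂ) ^ n ∣ g := by
    intro g
    rw [PowerSeries.X_pow_dvd_iff, LinearMap.mem_ker, hφ]
    constructor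
    · intro h m hm
      have := congrFun h ⟨m, hm⟩
      simpa using this
    · intro h
      funext i
      simpa using h i i.2
  set S : Submodule ℂ (PowerSeries ℂ) := LinearMap.ker φ with hS
  -- the quotient is finite dimensional
  have hfd : FiniteDimensional ℂ (PowerSeries ℂ ⧸ S) := by
    have hinj : Function.Injective (S.liftQ φ le_rfl) := by
      rw [← LinearMap.ker_eq_bot, Submodule.ker_liftQ_eq_bot _ _ _ le_rfl]
    exact FiniteDimensional.of_injective (S.liftQ φ le_rfl) hinj
  -- f maps S into S
  have hmaps : S ≤ S.comap f := by
    intro g hg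
    simp only [Submodule.mem_comap]
    rw [hS, hker] at hg ⊢
    exact hcompat n g hg
  set fbar : (PowerSeries ℂ ⧸ S) →ₗ[ℂ] (PowerSeries ℂ ⧸ S) := S.mapQ S f hmaps with hfbar
  have hcomm : ∀ g : PowerSeries ℂ, fbar (S.mkQ g) = S.mkQ (f g) := fun g =>
    by simp [hfbar, Submodule.mapQ_apply]
  have hsurj : Function.Surjective fbar := by
    intro y
    obtain ⟨g, rfl⟩ := S.mkQ_surjective y
    obtain ⟨h, rfl⟩ := hbij.2 g
    exact ⟨S.mkQ h, hcomm h⟩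
  have hinj : Function.Injective fbar :=
    (LinearMap.injective_iff_surjective).mpr hsurj
  apply Set.Subset.antisymm
  · rintro _ ⟨g, hg, rfl⟩
    exact hcompat n g hg
  · intro h hh
    obtain ⟨g, rfl⟩ := hbij.2 h
    refine ⟨g, ?_, rfl⟩
    have h0 : S.mkQ (f g) = 0 := by
      rw [Submodule.mkQ_apply, Submodule.Quotient.mk_eq_zero, hS, hker]
      exact hh
    have : fbar (S.mkQ g) = fbar 0 := by rw [hcomm, h0, map_zero]
    have hg0 : S.mkQ g = 0 := hinj this
    rw [Submodule.mkQ_apply, Submodule.Quotient.mk_eq_zero, hS, hker] at hg0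
    exact hg0
end

section
/- Let λ ∈ ℂ and consider the rank-2 (a,b)-module E with ℂ[[b]]-basis e_1, e_2 and relations a·e_2 = λ·b·e_2 and a·e_1 = λ·b·e_1 + b·e_2 + b^2·S(b)·e_1 + b^2·T(b)·e_2 for given S, T ∈ ℂ[[b]]. Then there exist U, V ∈ ℂ[[b]] such that ε_1 := (1 + b·U)·e_1 + b·V·e_2 and ε_2 := e_2 form a ℂ[[b]]-basis of E satisfying a·ε_1 = λ·b·ε_1 + b·ε_2 and a·ε_2 = λ·b·ε_2. -/
/-!
Write `ε₁ = (f, W)`. The first coordinate of `a·ε₁ = λ·b·ε₁ + b·ε₂` is the linear ODE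
`f' = -S·f`, solved with `f(0) = 1` by `f = exp(-∫S)`, so `f = 1 + b·U`. The second coordinate
is `b·W' = 1 - (1 + b·T)·f`, whose right-hand side is divisible by `b` because `f(0) = 1`;
so `W` can be taken to be an antiderivative vanishing at `0`, i.e. `W = b·V`. The change of
basis is triangular with diagonal entries `f` and `1`, both units of `ℂ[[b]]`.
-/

open PowerSeries

/-- The rank-2 (a,b)-module with `ℂ[[b]]`-basis `e₁ = (1,0)`, `e₂ = (0,1)`,
relations `a·e₂ = λ·b·e₂`, `a·e₁ = λ·b·e₁ + b·e₂ + b²·S·e₁ + b²·T·e₂`, and the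
Leibniz rule `a·(f·x) = f·(a·x) + b²·f'·x` (`b` acts by multiplication by `X`).
In coordinates `(f₁, f₂) = f₁·e₁ + f₂·e₂`. -/
noncomputable def aE (l : ℂ) (S T : PowerSeries ℂ)
    (x : PowerSeries ℂ × PowerSeries ℂ) : PowerSeries ℂ × PowerSeries ℂ :=
  (l • ((X : PowerSeries ℂ) * x.1) + (X : PowerSeries ℂ) ^ 2 * S * x.1
      + (X : PowerSeries ℂ) ^ 2 * d⁄dX ℂ x.1,
   (X : PowerSeries ℂ) * x.1 + (X : PowerSeries ℂ) ^ 2 * T * x.1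
      + l • ((X : PowerSeries ℂ) * x.2) + (X : PowerSeries ℂ) ^ 2 * d⁄dX ℂ x.2)

namespace PowerSeries

theorem constantCoeff_subst_of_constantCoeff_eq_zero {R : Type*} [CommRing R] {a : R⟦X⟧}
    (ha : constantCoeff a = 0) (f : R⟦X⟧) : constantCoeff (f.subst a) = constantCoeff f := by
  have hsub := constantCoeff_subst_eq_zero ha (f - C (constantCoeff f)) (by simp)
  rwa [subst_sub (HasSubst.of_constantCoeff_zero' ha), subst_C, map_sub, sub_eq_zero] at hsub

variable {K : Type*} [Field K]

noncomputable def antiderivative (f : K⟦X⟧) : K⟦X⟧ := X * mk fun n => coeff n f / (n + 1)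

theorem X_dvd_antiderivative (f : K⟦X⟧) : X ∣ antiderivative f := dvd_mul_right _ _

theorem constantCoeff_antiderivative (f : K⟦X⟧) : constantCoeff (antiderivative f) = 0 :=
  X_dvd_iff.mp (X_dvd_antiderivative f)

@[simp]
theorem derivative_antiderivative [CharZero K] (f : K⟦X⟧) : d⁄dX K (antiderivative f) = f := by
  ext n
  rw [antiderivative, coeff_derivative, coeff_succ_X_mul, coeff_mk,
    div_mul_cancel₀ _ (Nat.cast_add_one_ne_zero n)]

theorem exists_constantCoeff_eq_one_and_derivative_eq_mul [CharZero K] (g : K⟦X⟧) :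
    ∃ f : K⟦X⟧, constantCoeff f = 1 ∧ d⁄dX K f = g * f := by
  have hg := constantCoeff_antiderivative g
  refine ⟨(exp K).subst (antiderivative g), ?_, ?_⟩
  · rw [constantCoeff_subst_of_constantCoeff_eq_zero hg, constantCoeff_exp]
  · rw [derivative_subst (HasSubst.of_constantCoeff_zero' hg), derivative_exp,
      derivative_antiderivative, mul_comm]

end PowerSeries

theorem Prod.bijective_smul_add_smul_of_isUnit {R : Type*} [Ring R] {u : R} (hu : IsUnit u)
    (v : R) : Function.Bijective fun p : R × R => p.1 • (u, v) + p.2 • ((0, 1) : R × R) := by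
  obtain ⟨u, rfl⟩ := hu
  refine Function.bijective_iff_has_inverse.mpr
    ⟨fun q => (q.1 * ↑u⁻¹, q.2 - q.1 * ↑u⁻¹ * v), fun p => ?_, fun q => ?_⟩
  · ext <;> simp [mul_assoc]
  · ext <;> simp [mul_assoc]

theorem aE_zero_one (l : ℂ) (S T : ℂ⟦X⟧) :
    aE l S T (0, 1) = l • ((X : ℂ⟦X⟧) • ((0, 1) : ℂ⟦X⟧ × ℂ⟦X⟧)) := by
  ext : 1 <;> simp [aE]

theorem aE_eq_of_derivative_eq (l : ℂ) {S T f W : ℂ⟦X⟧} (hf : d⁄dX ℂ f = -S * f)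
    (hW : X * d⁄dX ℂ W = 1 - (1 + X * T) * f) :
    aE l S T (f, W) = l • ((X : ℂ⟦X⟧) • (f, W)) + (X : ℂ⟦X⟧) • ((0, 1) : ℂ⟦X⟧ × ℂ⟦X⟧) := by
  ext : 1
  · simp only [aE, hf, Prod.smul_mk, Prod.fst_add, smul_eq_mul, mul_zero, add_zero]
    ring
  · simp only [aE, Prod.smul_mk, Prod.snd_add, smul_eq_mul, mul_one]
    linear_combination X * hW

/-- There exist `U, V ∈ ℂ[[b]]` such that `ε₁ := (1 + b·U)·e₁ + b·V·e₂` and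
`ε₂ := e₂` form a `ℂ[[b]]`-basis of `E` with `a·ε₁ = λ·b·ε₁ + b·ε₂` and
`a·ε₂ = λ·b·ε₂`. -/
theorem stmt14 (l : ℂ) (S T : PowerSeries ℂ) :
    ∃ U V : PowerSeries ℂ,
      aE l S T (1 + X * U, X * V)
          = l • ((X : PowerSeries ℂ) • ((1 + X * U, X * V) : PowerSeries ℂ × PowerSeries ℂ))
            + (X : PowerSeries ℂ) • ((0, 1) : PowerSeries ℂ × PowerSeries ℂ) ∧
      aE l S T (0, 1)
          = l • ((X : PowerSeries ℂ) • ((0, 1) : PowerSeries ℂ × PowerSeries ℂ)) ∧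
      Function.Bijective (fun p : PowerSeries ℂ × PowerSeries ℂ =>
        p.1 • ((1 + X * U, X * V) : PowerSeries ℂ × PowerSeries ℂ)
          + p.2 • ((0, 1) : PowerSeries ℂ × PowerSeries ℂ)) := by
  obtain ⟨f, hf1, hf⟩ := exists_constantCoeff_eq_one_and_derivative_eq_mul (-S)
  obtain ⟨U, hU⟩ : X ∣ f - 1 := X_dvd_iff.mpr (by simp [hf1])
  obtain ⟨V, hV⟩ := X_dvd_antiderivative (-(U + T * f))
  have hfU : 1 + X * U = f := by rw [← hU]; ring
  refine ⟨U, V, ?_, aE_zero_one l S T, ?_⟩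
  · rw [hfU, ← hV]
    refine aE_eq_of_derivative_eq l hf ?_
    rw [derivative_antiderivative]
    linear_combination hU
  · rw [hfU]
    exact Prod.bijective_smul_add_smul_of_isUnit (isUnit_iff_constantCoeff.mpr (by simp [hf1])) _
end

section
/- Let λ ∈ ℂ with λ ∉ -ℕ and p ≥ 1 an integer. In the module Ξ_λ^{(1)} consider φ := s^{λ+p-2}·Log s + S(b)·s^{λ-2} where S ∈ ℂ[[b]] with S(0) ≠ 0. Then (a - (λ+p-1)·b)·φ = [b·S'(b) - p·S(b) + ρ·b^p]·(s^{λ-1}/(λ-1)), where ρ := (λ+p-2)(λ+p-3)⋯(λ-1) = Γ(λ+p-1)/Γ(λ-1), and hence (a - λ·b)·T(b)^{-1}·(a - (λ+p-1)·b)·φ = 0 with T(b) := b·S'(b) - p·S(b) + ρ·b^p, T(0) = -p·S(0) ≠ 0. -/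
/-!
In the basis `(s^{λ+p-2}·Log s, s^{λ-2})`, the operator `a - (λ+p-1)·b` annihilates the `Log`
coordinate up to the term `b·s^{λ+p-2} = ρ·b^{p+1}·s^{λ-2}`, while on `S(b)·s^{λ-2}` the Leibniz
rule leaves `b²S' - p·b·S`. Hence the image is `b·T(b)·s^{λ-2}`, and dividing by `T` leaves
`b·s^{λ-2} = s^{λ-1}/(λ-1)`, an eigenvector of `a` with eigenvalue `λ·b`.
-/

open PowerSeries

/-- The rank-2 module with `ℂ[[b]]`-basis `ε₁ := s^{λ+p-2}·Log s` and
`ε₀ := s^{λ-2}` (coordinates in that order), with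
`a·ε₀ = (λ-1)·b·ε₀`, `a·ε₁ = (λ+p-1)·b·ε₁ + b·s^{λ+p-2}` where
`s^{λ+p-2} = ((λ-1)·λ⋯(λ+p-2))·b^p·s^{λ-2}` (since `b·s^{μ-1} = s^μ/μ`), and the
Leibniz rule `a·(f·x) = f·(a·x) + b²·f'·x` (`b` = multiplication by `X`). -/
noncomputable def aTh (l : ℂ) (p : ℕ) (x : PowerSeries ℂ × PowerSeries ℂ) :
    PowerSeries ℂ × PowerSeries ℂ :=
  ((l + p - 1) • ((X : PowerSeries ℂ) * x.1) + (X : PowerSeries ℂ) ^ 2 * d⁄dX ℂ x.1,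
   (l - 1) • ((X : PowerSeries ℂ) * x.2) + (X : PowerSeries ℂ) ^ 2 * d⁄dX ℂ x.2
      + (∏ j ∈ Finset.range p, (l - 1 + j)) • ((X : PowerSeries ℂ) ^ (p + 1) * x.1))

section

variable (l : ℂ) (p : ℕ)

lemma aTh_one_sub_smul (S : PowerSeries ℂ) :
    aTh l p (1, S)
        - (l + p - 1) • ((X : PowerSeries ℂ) • ((1, S) : PowerSeries ℂ × PowerSeries ℂ))
      = (0, X * (X * d⁄dX ℂ S - (p : ℂ) • S
          + (∏ j ∈ Finset.range p, (l - 1 + (j : ℂ))) • (X : PowerSeries ℂ) ^ p)) := by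
  ext1
  · simp [aTh, Prod.smul_def, smul_eq_mul]
  · simp only [aTh, Prod.smul_def, smul_eq_mul, Prod.snd_sub, smul_eq_C_mul, map_sub, map_add,
      map_natCast]
    ring

lemma aTh_zero_X :
    aTh l p (0, X) = l • ((X : PowerSeries ℂ) • ((0, X) : PowerSeries ℂ × PowerSeries ℂ)) := by
  ext1
  · simp [aTh]
  · simp only [aTh, Prod.smul_def, smul_eq_mul, smul_eq_C_mul, map_sub, map_one, derivative_X,
      mul_zero, smul_zero, add_zero]
    ring

end

lemma constantCoeff_X_mul_derivative_sub_add {p : ℕ} (hp : p ≠ 0) (S : PowerSeries ℂ) (ρ : ℂ) :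
    constantCoeff (X * d⁄dX ℂ S - (p : ℂ) • S + ρ • (X : PowerSeries ℂ) ^ p)
      = -(p : ℂ) * constantCoeff S := by
  simp [smul_eq_C_mul, zero_pow hp]

lemma smul_zero_X_mul_of_mul_eq_one {T Tinv : PowerSeries ℂ} (h : T * Tinv = 1) :
    Tinv • (((0 : PowerSeries ℂ), (X : PowerSeries ℂ) * T) : PowerSeries ℂ × PowerSeries ℂ)
      = (0, X) := by
  rw [Prod.smul_mk, smul_zero, smul_eq_mul, mul_left_comm, mul_comm Tinv T, h, mul_one]

theorem stmt17_general (l : ℂ) (p : ℕ) (hp : 1 ≤ p)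
    (S : PowerSeries ℂ) :
    ∀ ρ : ℂ, ρ = ∏ j ∈ Finset.range p, (l - 1 + (j : ℂ)) →
    ∀ T : PowerSeries ℂ, T = X * d⁄dX ℂ S - (p : ℂ) • S + ρ • (X : PowerSeries ℂ) ^ p →
      (aTh l p ((1, S) : PowerSeries ℂ × PowerSeries ℂ)
          - (l + p - 1) • ((X : PowerSeries ℂ) • ((1, S) : PowerSeries ℂ × PowerSeries ℂ))
        = ((0 : PowerSeries ℂ), (X : PowerSeries ℂ) * T)) ∧
      constantCoeff T = -(p : ℂ) * constantCoeff S ∧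
      ∀ Tinv : PowerSeries ℂ, T * Tinv = 1 →
        aTh l p (Tinv • (((0 : PowerSeries ℂ), (X : PowerSeries ℂ) * T) :
            PowerSeries ℂ × PowerSeries ℂ))
          = l • ((X : PowerSeries ℂ) •
              (Tinv • (((0 : PowerSeries ℂ), (X : PowerSeries ℂ) * T) :
                PowerSeries ℂ × PowerSeries ℂ))) := by
  rintro ρ rfl T rfl
  refine ⟨aTh_one_sub_smul l p S,
    constantCoeff_X_mul_derivative_sub_add (by omega) S _, fun Tinv hTinv => ?_⟩
  rw [smul_zero_X_mul_of_mul_eq_one hTinv, aTh_zero_X]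

/-- Let `λ ∉ -ℕ`, `p ≥ 1`, and `φ := s^{λ+p-2}·Log s + S(b)·s^{λ-2}` with `S(0) ≠ 0`.
Then `(a - (λ+p-1)·b)·φ = [b·S' - p·S + ρ·b^p]·(s^{λ-1}/(λ-1))` with
`ρ = (λ-1)·λ⋯(λ+p-2) = Γ(λ+p-1)/Γ(λ-1)` (note `s^{λ-1}/(λ-1) = b·s^{λ-2}`);
moreover `T := b·S' - p·S + ρ·b^p` satisfies `T(0) = -p·S(0) ≠ 0` and
`(a - λ·b)·(T(b)⁻¹·(a - (λ+p-1)·b)·φ) = 0`. -/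
theorem stmt17 (l : ℂ) (hl : ∀ n : ℕ, l ≠ -(n : ℂ)) (p : ℕ) (hp : 1 ≤ p)
    (S : PowerSeries ℂ) (hS : constantCoeff S ≠ 0) :
    ∀ ρ : ℂ, ρ = ∏ j ∈ Finset.range p, (l - 1 + (j : ℂ)) →
    ∀ T : PowerSeries ℂ, T = X * d⁄dX ℂ S - (p : ℂ) • S + ρ • (X : PowerSeries ℂ) ^ p →
      (aTh l p ((1, S) : PowerSeries ℂ × PowerSeries ℂ)
          - (l + p - 1) • ((X : PowerSeries ℂ) • ((1, S) : PowerSeries ℂ × PowerSeries ℂ))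
        = ((0 : PowerSeries ℂ), (X : PowerSeries ℂ) * T)) ∧
      constantCoeff T = -(p : ℂ) * constantCoeff S ∧
      ∀ Tinv : PowerSeries ℂ, T * Tinv = 1 →
        aTh l p (Tinv • (((0 : PowerSeries ℂ), (X : PowerSeries ℂ) * T) :
            PowerSeries ℂ × PowerSeries ℂ))
          = l • ((X : PowerSeries ℂ) •
              (Tinv • (((0 : PowerSeries ℂ), (X : PowerSeries ℂ) * T) :
                PowerSeries ℂ × PowerSeries ℂ))) :=
  stmt17_general l p hp S
end
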